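/- The trivial extension T(R, M) of a ring R by an (R,R)-bimodule M is GSWNC if and only if R is GSWNC. -/

import Mathlib

/-!
An element `a` is strongly weakly nil-clean exactly when `a ^ 2 - a` or `a ^ 2 + a` is
nilpotent: an idempotent `e` commuting with `a` and with `a - e` nilpotent is produced by Newton's
method for `X ^ 2 - X` in the commutative ring `ℤ[a]`. Nilpotency, and hence this property, is
detected modulo a nil ideal, and so is invertibility; the kernel of `fst : T(R, M) → R` has
square zero.
-/

/-- An element is strongly weakly nil-clean. -/
def IsSWNC {R : Type*} [Ring R] (a : R) : Prop :=
  ∃ q e : R, IsNilpotent q ∧ IsIdempotentElem e ∧ Commute q e ∧ (a = q + e ∨ a = q - e)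

/-- A ring is GSWNC if every non-unit is strongly weakly nil-clean. -/
def IsGSWNC (R : Type*) [Ring R] : Prop :=
  ∀ a : R, ¬ IsUnit a → IsSWNC a

open Polynomial TrivSqZeroExt

section Ring

variable {A B : Type*} [Ring A] [Ring B]

theorem IsNilpotent.sq_sub_self_add_of_commute {q e : A} (hq : IsNilpotent q)
    (he : IsIdempotentElem e) (hqe : Commute q e) :
    IsNilpotent ((q + e) ^ 2 - (q + e)) := by
  have h : (q + e) ^ 2 - (q + e) = q * (q + 2 * e - 1) := by
    rw [sq, add_mul, mul_add, mul_add, he.eq, ← hqe.eq, two_mul, mul_sub, mul_add, mul_add,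
      mul_one]
    abel
  have hc : Commute q (q + 2 * e - 1) :=
    ((Commute.refl q).add_right ((Commute.ofNat_right q 2).mul_right hqe)).sub_right
      (.one_right q)
  exact h ▸ hc.isNilpotent_mul_right hq

theorem IsNilpotent.exists_isIdempotentElem_commute_isNilpotent_sub {a : A}
    (h : IsNilpotent (a ^ 2 - a)) :
    ∃ e, IsIdempotentElem e ∧ Commute a e ∧ IsNilpotent (a - e) := by
  let S := Algebra.adjoin ℤ {a}
  let x : S := ⟨a, Algebra.self_mem_adjoin_singleton ℤ a⟩
  have hval : ∀ y : S, IsNilpotent (S.val y) ↔ IsNilpotent y :=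
    fun _ ↦ IsNilpotent.map_iff Subtype.val_injective
  have hP : IsNilpotent (aeval x (X ^ 2 - X : ℤ[X])) := by
    rw [← hval]
    simpa [x] using h
  have hP' : IsUnit (aeval x (derivative (X ^ 2 - X : ℤ[X]))) := by
    have hx : IsNilpotent (x ^ 2 - x) := by simpa using hP
    -- the derivative `2 * x - 1` is a unit since its square is `1 + 4 * (x ^ 2 - x)`
    have hsq : (2 * x - 1) ^ 2 = 1 + 4 * (x ^ 2 - x) := by ring
    have hunit : IsUnit ((2 * x - 1) ^ 2) :=
      hsq ▸ (Commute.all _ _ |>.isNilpotent_mul_left hx).isUnit_one_add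
    simpa [derivative_X_pow, two_mul] using (isUnit_pow_iff two_ne_zero).1 hunit
  obtain ⟨r, ⟨hxr, hr⟩, -⟩ := existsUnique_nilpotent_sub_and_aeval_eq_zero hP hP'
  refine ⟨r, ?_, Algebra.commute_of_mem_adjoin_singleton_of_commute r.2 (Commute.refl a), ?_⟩
  · have : r * r = r := by
      simpa [sq, sub_eq_zero] using hr
    exact congrArg Subtype.val this
  · exact (hval _).2 hxr

theorem isSWNC_iff {a : A} :
    IsSWNC a ↔ IsNilpotent (a ^ 2 - a) ∨ IsNilpotent ((-a) ^ 2 - -a) := by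
  constructor
  · rintro ⟨q, e, hq, he, hqe, rfl | rfl⟩
    · exact .inl (hq.sq_sub_self_add_of_commute he hqe)
    · right
      rw [neg_sub', sub_neg_eq_add]
      exact hq.neg.sq_sub_self_add_of_commute he hqe.neg_left
  · rintro (h | h)
    · obtain ⟨e, he, hae, hnil⟩ := h.exists_isIdempotentElem_commute_isNilpotent_sub
      exact ⟨a - e, e, hnil, he, hae.sub_left (.refl e), .inl (sub_add_cancel a e).symm⟩
    · obtain ⟨e, he, hae, hnil⟩ := h.exists_isIdempotentElem_commute_isNilpotent_sub
      have hae' : Commute a e := by simpa using hae.neg_left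
      refine ⟨a + e, e, ?_, he, hae'.add_left (.refl e), .inr (add_sub_cancel_right a e).symm⟩
      rw [show a + e = -(-a - e) by abel]
      exact hnil.neg

theorem isNilpotent_map_iff_of_ker_isNilpotent {f : A →+* B}
    (hker : ∀ x ∈ RingHom.ker f, IsNilpotent x) {a : A} :
    IsNilpotent (f a) ↔ IsNilpotent a := by
  refine ⟨fun ⟨n, hn⟩ ↦ .of_pow (m := n) (hker _ ?_), (·.map f)⟩
  rwa [RingHom.mem_ker, map_pow]

theorem isSWNC_map_iff_of_ker_isNilpotent {f : A →+* B}
    (hker : ∀ x ∈ RingHom.ker f, IsNilpotent x) {a : A} : IsSWNC (f a) ↔ IsSWNC a := by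
  simp only [isSWNC_iff, ← map_neg, ← map_pow, ← map_sub,
    isNilpotent_map_iff_of_ker_isNilpotent hker]

theorem isGSWNC_iff_of_surjective_of_ker_isNilpotent {f : A →+* B} [IsLocalHom f]
    (hf : Function.Surjective f) (hker : ∀ x ∈ RingHom.ker f, IsNilpotent x) :
    IsGSWNC A ↔ IsGSWNC B := by
  constructor
  · intro hA b hb
    obtain ⟨a, rfl⟩ := hf b
    exact (isSWNC_map_iff_of_ker_isNilpotent hker).2 (hA a (mt (·.map f) hb))
  · intro hB a ha
    exact (isSWNC_map_iff_of_ker_isNilpotent hker).1 (hB (f a) (mt (isUnit_of_map_unit f a) ha))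

end Ring

namespace TrivSqZeroExt

variable {R M : Type*} [Ring R] [AddCommGroup M] [Module R M] [Module Rᵐᵒᵖ M]
  [SMulCommClass R Rᵐᵒᵖ M]

instance isLocalHom_fstHom : IsLocalHom (fstHom ℤ R M).toRingHom :=
  ⟨fun _ ↦ isUnit_iff_isUnit_fst.2⟩

theorem isNilpotent_of_fst_eq_zero {x : TrivSqZeroExt R M} (hx : x.fst = 0) : IsNilpotent x := by
  rw [show x = inr x.snd from ext hx rfl]
  exact ⟨2, by rw [pow_two, inr_mul_inr]⟩

end TrivSqZeroExt

theorem stmt18 {R M : Type*} [Ring R] [AddCommGroup M] [Module R M] [Module Rᵐᵒᵖ M]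
    [SMulCommClass R Rᵐᵒᵖ M] :
    IsGSWNC (TrivSqZeroExt R M) ↔ IsGSWNC R :=
  isGSWNC_iff_of_surjective_of_ker_isNilpotent (f := (fstHom ℤ R M).toRingHom)
    (fun r ↦ ⟨inl r, fst_inl M r⟩) fun _ hx ↦ isNilpotent_of_fst_eq_zero hx
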